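/- arXiv:1708.09826 — 3 statements merged into one kernel-verified Lean document; each statement's English description precedes it below -/
import Mathlib

section
/- Given real r₁ > 0 and e > 1 + r₁, with λ defined by formula (4), the quantity ρ₁ = (r₁ + e − λ)/(λ(r₁ + e) − 1) satisfies 0 < ρ₁ < 1/λ. -/
/-!
`λ` is the larger root of `e x² - (e² + 1 - r₁²) x + e`, whose discriminant is `4 D²`.
One has `1 < λ` because `e² + 1 - r₁² - 2e = (e - 1)² - r₁² > 0`, and `λ < r₁ + e` because the
quadratic equals `r₁ ((r₁ + e)² - 1) > 0` at `r₁ + e`. For `1 < λ < c`, the value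
`(c - λ) / (λ c - 1)` is positive, and it is below `1 / λ` exactly because `λ² > 1`.
-/

lemma div_lt_one_div_of_one_lt_of_lt {lam c : ℝ} (h1 : 1 < lam) (h2 : lam < c) :
    0 < (c - lam) / (lam * c - 1) ∧ (c - lam) / (lam * c - 1) < 1 / lam := by
  have hden : 0 < lam * c - 1 := by nlinarith
  refine ⟨div_pos (by linarith) hden, ?_⟩
  rw [div_lt_div_iff₀ hden (by linarith)]
  nlinarith

lemma one_lt_larger_root {r e D : ℝ} (hr : 0 ≤ r) (he : 1 + r < e) (hD : 0 ≤ D) :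
    1 < (e ^ 2 + 1 - r ^ 2 + D) / (2 * e) := by
  have hgap : 0 < (e - 1) ^ 2 - r ^ 2 := by
    nlinarith [mul_pos (by linarith : 0 < e - 1 - r) (by linarith : 0 < e - 1 + r)]
  rw [lt_div_iff₀ (by linarith)]
  nlinarith

lemma larger_root_lt_add {r e : ℝ} (hr : 0 < r) (he : 1 + r < e) :
    (e ^ 2 + 1 - r ^ 2 + √((e ^ 2 - (1 + r) ^ 2) * (e ^ 2 - (1 - r) ^ 2))) / (2 * e) < r + e := by
  set D := √((e ^ 2 - (1 + r) ^ 2) * (e ^ 2 - (1 - r) ^ 2))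
  set u := (r + e) ^ 2 - 1
  have hu : 0 < u := by nlinarith
  have hDsq : D ^ 2 = (e ^ 2 - (1 + r) ^ 2) * (e ^ 2 - (1 - r) ^ 2) :=
    Real.sq_sqrt (mul_nonneg (by nlinarith) (by nlinarith))
  have hsq : D ^ 2 + 4 * e * r * u = u ^ 2 := by rw [hDsq]; ring
  have hDu : D < u :=
    lt_of_pow_lt_pow_left₀ 2 hu.le (by nlinarith [mul_pos (mul_pos (by linarith : 0 < e) hr) hu])
  rw [div_lt_iff₀ (by linarith)]
  linarith

theorem stmt_7 (r₁ e : ℝ) (hr : 0 < r₁) (he : 1 + r₁ < e)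
    (D lam ρ₁ : ℝ)
    (hD : D = Real.sqrt ((e ^ 2 - (1 + r₁) ^ 2) * (e ^ 2 - (1 - r₁) ^ 2)))
    (hlam : lam = (e ^ 2 + 1 - r₁ ^ 2 + D) / (2 * e))
    (hρ : ρ₁ = (r₁ + e - lam) / (lam * (r₁ + e) - 1)) :
    0 < ρ₁ ∧ ρ₁ < 1 / lam := by
  have hlam1 : 1 < lam := hlam ▸ one_lt_larger_root hr.le he (hD ▸ Real.sqrt_nonneg _)
  have hlam2 : lam < r₁ + e := hlam ▸ hD ▸ larger_root_lt_add hr he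
  exact hρ ▸ div_lt_one_div_of_one_lt_of_lt hlam1 hlam2
end

section
/- The hypotrochoid map F(w) = C(w + m/wⁿ) with C > 0, 0 ≤ m < 1/n², n ≥ 1, is injective on the domain |w| ≥ 1. -/
/-!
Writing `u = w⁻¹`, the relation `w₁ + m w₁⁻ⁿ = w₂ + m w₂⁻ⁿ` says `w₁ - w₂ = m (u₂ⁿ - u₁ⁿ)`.
On the closed unit ball `u ↦ uⁿ` is `n`-Lipschitz and outside the open unit ball `w ↦ w⁻¹` is
`1`-Lipschitz, so `‖w₁ - w₂‖ ≤ m n ‖w₁ - w₂‖`, which forces `w₁ = w₂` since `m n < 1`.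
-/

theorem norm_pow_sub_pow_le_of_norm_le_one {R : Type*} [SeminormedRing R] [NormOneClass R]
    {u v : R} (hu : ‖u‖ ≤ 1) (hv : ‖v‖ ≤ 1) (n : ℕ) :
    ‖u ^ n - v ^ n‖ ≤ n * ‖u - v‖ := by
  induction n with
  | zero => simp
  | succ n ih =>
    have hvn : ‖v ^ n‖ ≤ 1 := (norm_pow_le v n).trans (pow_le_one₀ (norm_nonneg v) hv)
    calc ‖u ^ (n + 1) - v ^ (n + 1)‖ = ‖u * (u ^ n - v ^ n) + (u - v) * v ^ n‖ := by
          rw [pow_succ', pow_succ', mul_sub, sub_mul, sub_add_sub_cancel]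
      _ ≤ ‖u‖ * ‖u ^ n - v ^ n‖ + ‖u - v‖ * ‖v ^ n‖ :=
          (norm_add_le _ _).trans (add_le_add (norm_mul_le _ _) (norm_mul_le _ _))
      _ ≤ 1 * (n * ‖u - v‖) + ‖u - v‖ * 1 := by gcongr
      _ = (n + 1 : ℕ) * ‖u - v‖ := by push_cast; ring

theorem norm_inv_sub_inv_le_of_one_le_norm {𝕜 : Type*} [NormedDivisionRing 𝕜] {a b : 𝕜}
    (ha : 1 ≤ ‖a‖) (hb : 1 ≤ ‖b‖) : ‖a⁻¹ - b⁻¹‖ ≤ ‖a - b‖ := by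
  have ha0 : a ≠ 0 := norm_pos_iff.1 (zero_lt_one.trans_le ha)
  have hb0 : b ≠ 0 := norm_pos_iff.1 (zero_lt_one.trans_le hb)
  calc ‖a⁻¹ - b⁻¹‖ = ‖a‖⁻¹ * ‖a - b‖ * ‖b‖⁻¹ := by
        rw [inv_sub_inv' ha0 hb0, norm_mul, norm_mul, norm_inv, norm_inv, norm_sub_rev]
    _ ≤ 1 * ‖a - b‖ * 1 := by gcongr <;> exact inv_le_one_of_one_le₀ ‹_›
    _ = ‖a - b‖ := by ring

theorem injOn_add_mul_zpow_neg {𝕜 : Type*} [NormedDivisionRing 𝕜] {c : 𝕜} {n : ℕ}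
    (hcn : ‖c‖ * n < 1) :
    Set.InjOn (fun w : 𝕜 ↦ w + c * w ^ (-(n : ℤ))) {w | 1 ≤ ‖w‖} := by
  intro w₁ h₁ w₂ h₂ heq
  simp only [Set.mem_ofPred_eq, zpow_neg, zpow_natCast, ← inv_pow] at h₁ h₂ heq
  have hdiff : w₁ - w₂ = c * (w₂⁻¹ ^ n - w₁⁻¹ ^ n) := by
    rw [mul_sub, sub_eq_sub_iff_add_eq_add, heq, add_comm]
  have hle : ‖w₁ - w₂‖ ≤ ‖c‖ * n * ‖w₁ - w₂‖ :=
    calc ‖w₁ - w₂‖ = ‖c‖ * ‖w₂⁻¹ ^ n - w₁⁻¹ ^ n‖ := by rw [hdiff, norm_mul]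
      _ ≤ ‖c‖ * (n * ‖w₂⁻¹ - w₁⁻¹‖) := by
          gcongr
          exact norm_pow_sub_pow_le_of_norm_le_one (by simpa using inv_le_one_of_one_le₀ h₂)
            (by simpa using inv_le_one_of_one_le₀ h₁) n
      _ ≤ ‖c‖ * (n * ‖w₂ - w₁‖) := by
          gcongr
          exact norm_inv_sub_inv_le_of_one_le_norm h₂ h₁
      _ = ‖c‖ * n * ‖w₁ - w₂‖ := by rw [norm_sub_rev]; ring
  have hzero : ‖w₁ - w₂‖ ≤ 0 := by nlinarith [norm_nonneg (w₁ - w₂)]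
  exact sub_eq_zero.1 (norm_le_zero_iff.1 hzero)

theorem stmt_11_general (C m : ℝ) (hC : 0 < C) (n : ℕ)
    (hm0 : 0 ≤ m) (hm1 : m < 1 / n ^ 2)
    (F : ℂ → ℂ) (hF : ∀ w, F w = (C : ℂ) * (w + (m : ℂ) * w ^ (-(n : ℤ))))
    (w₁ w₂ : ℂ) (h1 : 1 ≤ ‖w₁‖) (h2 : 1 ≤ ‖w₂‖)
    (heq : F w₁ = F w₂) : w₁ = w₂ := by
  have hmn2 : m * n ^ 2 < 1 := by
    rcases n.eq_zero_or_pos with rfl | hn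
    · simp
    · exact (lt_div_iff₀ (by positivity)).1 hm1
  have hmn : ‖(m : ℂ)‖ * n < 1 := by
    rw [Complex.norm_real, Real.norm_of_nonneg hm0]
    have : (n : ℝ) ≤ n ^ 2 := by exact_mod_cast Nat.le_self_pow two_ne_zero n
    nlinarith
  have hC0 : (C : ℂ) ≠ 0 := Complex.ofReal_ne_zero.2 hC.ne'
  exact injOn_add_mul_zpow_neg hmn h1 h2 (mul_left_cancel₀ hC0 (by simpa only [hF] using heq))

theorem stmt_11 (C m : ℝ) (hC : 0 < C) (n : ℕ) (hn : 1 ≤ n)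
    (hm0 : 0 ≤ m) (hm1 : m < 1 / n ^ 2)
    (F : ℂ → ℂ) (hF : ∀ w, F w = (C : ℂ) * (w + (m : ℂ) * w ^ (-(n : ℤ))))
    (w₁ w₂ : ℂ) (h1 : 1 ≤ ‖w₁‖) (h2 : 1 ≤ ‖w₂‖)
    (heq : F w₁ = F w₂) : w₁ = w₂ :=
  stmt_11_general C m hC n hm0 hm1 F hF w₁ w₂ h1 h2 heq
end

section
/- The Schwarz–Christoffel series F(w) = C·Σ_{k=0}^∞ (−1)^k·binom(2/n, k)·w^{1−nk}/(1 − nk) satisfies F'(w) = C·(1 − w^{−n})^{2/n} for |w| > 1 (with the principal branch of the power). -/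
/-!
Differentiating the series term by term, `w ^ (1 - n k) / (1 - n k)` contributes `(w ^ (-n)) ^ k`,
so `F' w / C` is the binomial series of exponent `2 / n` evaluated at `-w ^ (-n)`, a point of the
unit disc. Term-by-term differentiation is legitimate near `w` because on `‖z‖ > r > 1` the
derivatives are dominated by `‖binom(2 / n, k)‖ (r ^ n)⁻¹ ^ k`, which is summable since the
binomial series has radius of convergence at least `1`.
-/

noncomputable def genBinom (a : ℂ) (k : ℕ) : ℂ :=
  (∏ i ∈ Finset.range k, (a - i)) / (Nat.factorial k)

lemma genBinom_eq_choose (a : ℂ) (k : ℕ) : genBinom a k = Ring.choose a k := by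
  rw [Ring.choose_eq_smul, ← Polynomial.aeval_eq_smeval, ← Polynomial.eval_map_algebraMap,
    descPochhammer_map, descPochhammer_eval_eq_prod_range, genBinom, smul_eq_mul, inv_mul_eq_div]

lemma hasSum_genBinom_mul_pow (a : ℂ) {z : ℂ} (hz : ‖z‖ < 1) :
    HasSum (fun k ↦ genBinom a k * z ^ k) ((1 + z) ^ a) := by
  have := (Complex.one_add_cpow_hasFPowerSeriesOnBall_zero (a := a)).hasSum (y := z)
    (by simpa [← ofReal_norm] using hz)
  simpa [binomialSeries, FormalMultilinearSeries.coeff_ofScalars, genBinom_eq_choose, mul_comm]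
    using this

lemma summable_norm_genBinom_mul_pow (a : ℂ) {ρ : ℝ} (h0 : 0 ≤ ρ) (h1 : ρ < 1) :
    Summable fun k ↦ ‖genBinom a k‖ * ρ ^ k := by
  have := (binomialSeries ℂ a).summable_norm_mul_pow (r := ⟨ρ, h0⟩)
    ((ENNReal.coe_lt_one_iff.2 h1).trans_le binomialSeries_radius_ge_one)
  simp only [binomialSeries, FormalMultilinearSeries.ofScalars_norm, ← genBinom_eq_choose] at this
  exact this

section LaurentSeries

variable {n : ℕ}

lemma zpow_one_sub_mul_sub_one {K : Type*} [DivisionRing K] (z : K) (k : ℕ) :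
    z ^ (1 - (n : ℤ) * k - 1) = (z ^ (-(n : ℤ))) ^ k := by
  rw [← zpow_natCast, ← zpow_mul]; ring_nf

lemma zpow_one_sub_mul {K : Type*} [DivisionRing K] {z : K} (hz : z ≠ 0) (k : ℕ) :
    z ^ (1 - (n : ℤ) * k) = z * (z ^ (-(n : ℤ))) ^ k := by
  rw [← zpow_one_sub_mul_sub_one, ← zpow_one_add₀ hz]; ring_nf

lemma norm_zpow_neg_le {K : Type*} [NormedDivisionRing K] {r : ℝ} (hr : 0 < r) {z : K}
    (hz : r ≤ ‖z‖) : ‖z ^ (-(n : ℤ))‖ ≤ (r ^ n)⁻¹ := by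
  rw [norm_zpow, zpow_neg, zpow_natCast]
  gcongr

lemma norm_zpow_neg_lt_one {K : Type*} [NormedDivisionRing K] (hn : n ≠ 0) {z : K}
    (hz : 1 < ‖z‖) : ‖z ^ (-(n : ℤ))‖ < 1 := by
  rw [norm_zpow, zpow_neg, zpow_natCast]
  exact inv_lt_one_of_one_lt₀ (one_lt_pow₀ hz hn)

variable {𝕜 : Type*} [RCLike 𝕜]

lemma one_le_norm_one_sub_mul (hn : 2 ≤ n) (k : ℕ) :
    1 ≤ ‖(1 - (n : ℤ) * k : 𝕜)‖ := by
  have : (1 - (n : ℤ) * k : 𝕜) = ((1 - n * k : ℤ) : 𝕜) := by push_cast; ring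
  rw [this, ← RCLike.ofReal_intCast, RCLike.norm_ofReal]
  exact_mod_cast Int.one_le_abs (by rcases k with _ | k <;> simp; nlinarith)

lemma hasDerivAt_mul_zpow_one_sub_mul_div (hn : 2 ≤ n) (b : 𝕜) (k : ℕ) {z : 𝕜}
    (hz : z ≠ 0) :
    HasDerivAt (fun z ↦ b * z ^ (1 - (n : ℤ) * k) / (1 - (n : ℤ) * k))
      (b * (z ^ (-(n : ℤ))) ^ k) z := by
  have hk : (1 - (n : ℤ) * k : 𝕜) ≠ 0 :=
    norm_pos_iff.1 (by linarith [one_le_norm_one_sub_mul (𝕜 := 𝕜) hn k])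
  refine (((hasDerivAt_zpow _ z (.inl hz)).const_mul b).div_const _).congr_deriv ?_
  rw [← zpow_one_sub_mul_sub_one]
  push_cast at hk ⊢
  field_simp

theorem hasDerivAt_tsum_mul_zpow_one_sub_mul_div {c : ℕ → 𝕜} (hn : 2 ≤ n)
    (hc : ∀ ρ : ℝ, 0 ≤ ρ → ρ < 1 → Summable fun k ↦ ‖c k‖ * ρ ^ k) {w : 𝕜}
    (hw : 1 < ‖w‖) :
    HasDerivAt (fun z ↦ ∑' k : ℕ, c k * z ^ (1 - (n : ℤ) * k) / (1 - (n : ℤ) * k))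
      (∑' k : ℕ, c k * (w ^ (-(n : ℤ))) ^ k) w := by
  obtain ⟨r, hr, hrw⟩ := exists_between hw
  have hball : ∀ z ∈ Metric.ball w (‖w‖ - r), r < ‖z‖ := fun z hz ↦ by
    have := norm_sub_norm_le w z
    rw [Metric.mem_ball, dist_comm, dist_eq_norm] at hz
    linarith
  have hρ : (r ^ n)⁻¹ < 1 := inv_lt_one_of_one_lt₀ (one_lt_pow₀ hr (by omega))
  have hε : 0 < ‖w‖ - r := by linarith
  have hw' : ‖w ^ (-(n : ℤ))‖ < 1 := norm_zpow_neg_lt_one (by omega) hw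
  refine hasDerivAt_tsum_of_isPreconnected
    (g := fun k z ↦ c k * z ^ (1 - (n : ℤ) * k) / (1 - (n : ℤ) * k))
    (g' := fun k z ↦ c k * (z ^ (-(n : ℤ))) ^ k) (hc _ (by positivity) hρ) Metric.isOpen_ball
    (convex_ball w _).isPreconnected (fun k z hz ↦ ?_) (fun k z hz ↦ ?_)
    (Metric.mem_ball_self hε) ?_ (Metric.mem_ball_self hε)
  · exact hasDerivAt_mul_zpow_one_sub_mul_div hn (c k) k
      (norm_pos_iff.1 (by linarith [hball z hz]))
  · rw [norm_mul, norm_pow]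
    gcongr
    exact norm_zpow_neg_le (by linarith) (hball z hz).le
  · refine .of_norm_bounded ((hc _ (norm_nonneg _) hw').mul_left ‖w‖) fun k ↦ ?_
    rw [zpow_one_sub_mul (norm_pos_iff.1 (by linarith)), norm_div, norm_mul, norm_mul, norm_pow,
      mul_left_comm]
    exact div_le_of_le_mul₀ (norm_nonneg _) (by positivity)
      (le_mul_of_one_le_right (by positivity) (one_le_norm_one_sub_mul hn k))

end LaurentSeries

theorem stmt_18_general (n : ℕ) (hn : 3 ≤ n) (C : ℝ)
    (F : ℂ → ℂ)
    (hF : ∀ w : ℂ, F w = (C : ℂ) * ∑' k : ℕ,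
      (-1) ^ k * genBinom (2 / n) k * w ^ (1 - (n : ℤ) * k) / (1 - (n : ℤ) * k))
    (w : ℂ) (hw : 1 < ‖w‖) :
    HasDerivAt F ((C : ℂ) * (1 - w ^ (-(n : ℤ))) ^ ((2 : ℂ) / n)) w := by
  have hu : ‖-w ^ (-(n : ℤ))‖ < 1 := by
    rw [norm_neg]
    exact norm_zpow_neg_lt_one (by omega) hw
  have hsum : ∑' k : ℕ, (-1) ^ k * genBinom (2 / n) k * (w ^ (-(n : ℤ))) ^ k
      = (1 - w ^ (-(n : ℤ))) ^ ((2 : ℂ) / n) := by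
    rw [sub_eq_add_neg, ← (hasSum_genBinom_mul_pow _ hu).tsum_eq]
    exact tsum_congr fun k ↦ by rw [neg_pow]; ring
  have hc (ρ : ℝ) (h0 : 0 ≤ ρ) (h1 : ρ < 1) :
      Summable fun k ↦ ‖(-1) ^ k * genBinom (2 / n) k‖ * ρ ^ k := by
    simpa using summable_norm_genBinom_mul_pow (2 / n) h0 h1
  rw [funext hF, ← hsum]
  exact (hasDerivAt_tsum_mul_zpow_one_sub_mul_div (by omega) hc hw).const_mul _

theorem stmt_18 (n : ℕ) (hn : 3 ≤ n) (C : ℝ) (hC : 0 < C)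
    (F : ℂ → ℂ)
    (hF : ∀ w : ℂ, F w = (C : ℂ) * ∑' k : ℕ,
      (-1) ^ k * genBinom (2 / n) k * w ^ (1 - (n : ℤ) * k) / (1 - (n : ℤ) * k))
    (w : ℂ) (hw : 1 < ‖w‖) :
    HasDerivAt F ((C : ℂ) * (1 - w ^ (-(n : ℤ))) ^ ((2 : ℂ) / n)) w :=
  stmt_18_general n hn C F hF w hw
end
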